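/- Let U be a finite family of relations on a set 𝕏 such that each u ∈ U is a partial order on its reflexive support X(u) = {y | (y,y) ∈ u}, all u share a common least element x⊥, and for any u₁, u₂ ∈ U, u₁ ∩ u₂ restricted to X(u₁) ∩ X(u₂) agrees with both. Then (⋃U restricted to being a relation on X(⋃U), together with X(⋃U)) need not in general be transitive; but if additionally every u ∈ U is downward-closed in the union (i.e., u = (⋃U)|_{X(u)} and X(u) is a lower set of the union order), then ⋃U is a partial order on X(⋃U) with least element x⊥. -/

import Mathlib

/-- The reflexive support `X(u) = {y | (y,y) ∈ u}` of a relation `u`. -/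
def Xr {α : Type*} (u : Set (α × α)) : Set α := {y | (y, y) ∈ u}

/-!
Every pair of `⋃U` already lies in a single `u ∈ U`. For a chain `a ≥ b ≥ c` with `a ≥ b` in `u`,
`b ∈ X(u)` and `X(u)` is a lower set, so `c ∈ X(u)`; as `u` is the restriction of `⋃U` to `X(u)`,
`b ≥ c` holds in `u` too, and transitivity and antisymmetry are inherited from `u`.
-/

theorem Xr_mono {α : Type*} {u v : Set (α × α)} (h : u ⊆ v) : Xr u ⊆ Xr v :=
  fun _ ha => h ha

section SUnion

variable {α : Type*} {U : Set (Set (α × α))}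

theorem mem_Xr_sUnion_of_mem
    (hdom : ∀ u ∈ U, ∀ p ∈ u, p.1 ∈ Xr u ∧ p.2 ∈ Xr u) {p : α × α} (hp : p ∈ ⋃₀ U) :
    p.1 ∈ Xr (⋃₀ U) ∧ p.2 ∈ Xr (⋃₀ U) := by
  obtain ⟨u, hu, hpu⟩ := hp
  have hsub : Xr u ⊆ Xr (⋃₀ U) := Xr_mono (Set.subset_sUnion_of_mem hu)
  exact ⟨hsub (hdom u hu p hpu).1, hsub (hdom u hu p hpu).2⟩

theorem sUnion_trans
    (hdom : ∀ u ∈ U, ∀ p ∈ u, p.1 ∈ Xr u ∧ p.2 ∈ Xr u)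
    (htrans : ∀ u ∈ U, ∀ a b c, (a, b) ∈ u → (b, c) ∈ u → (a, c) ∈ u)
    (hrestr : ∀ u ∈ U, ⋃₀ U ∩ (Xr u ×ˢ Xr u) ⊆ u)
    (hlower : ∀ u ∈ U, ∀ a ∈ Xr u, ∀ b, (a, b) ∈ ⋃₀ U → b ∈ Xr u)
    {a b c : α} (hab : (a, b) ∈ ⋃₀ U) (hbc : (b, c) ∈ ⋃₀ U) : (a, c) ∈ ⋃₀ U := by
  obtain ⟨u, hu, habu⟩ := hab
  have hb : b ∈ Xr u := (hdom u hu _ habu).2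
  have hc : c ∈ Xr u := hlower u hu b hb c hbc
  have hbcu : (b, c) ∈ u := hrestr u hu ⟨hbc, hb, hc⟩
  exact ⟨u, hu, htrans u hu a b c habu hbcu⟩

theorem sUnion_antisymm
    (hdom : ∀ u ∈ U, ∀ p ∈ u, p.1 ∈ Xr u ∧ p.2 ∈ Xr u)
    (hantisymm : ∀ u ∈ U, ∀ a b, (a, b) ∈ u → (b, a) ∈ u → a = b)
    (hrestr : ∀ u ∈ U, ⋃₀ U ∩ (Xr u ×ˢ Xr u) ⊆ u)
    {a b : α} (hab : (a, b) ∈ ⋃₀ U) (hba : (b, a) ∈ ⋃₀ U) : a = b := by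
  obtain ⟨u, hu, habu⟩ := hab
  obtain ⟨ha, hb⟩ := hdom u hu _ habu
  exact hantisymm u hu a b habu (hrestr u hu ⟨hba, hb, ha⟩)

theorem sUnion_bot_le {xbot : α} (hbot : ∀ u ∈ U, ∀ y ∈ Xr u, (y, xbot) ∈ u) {y : α}
    (hy : y ∈ Xr (⋃₀ U)) : (y, xbot) ∈ ⋃₀ U := by
  obtain ⟨u, hu, hyu⟩ := hy
  exact ⟨u, hu, hbot u hu y hyu⟩

end SUnion

theorem union_of_compatible_bounded_subposets_general
    {α : Type*} (U : Set (Set (α × α))) (xbot : α)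
    -- each `u` is a partial order on its reflexive support `X(u)`
    (hdom : ∀ u ∈ U, ∀ p ∈ u, p.1 ∈ Xr u ∧ p.2 ∈ Xr u)
    (htrans : ∀ u ∈ U, ∀ a b c, (a, b) ∈ u → (b, c) ∈ u → (a, c) ∈ u)
    (hantisymm : ∀ u ∈ U, ∀ a b, (a, b) ∈ u → (b, a) ∈ u → a = b)
    -- all share the common least element `x⊥`
    (hbot : ∀ u ∈ U, xbot ∈ Xr u ∧ ∀ y ∈ Xr u, (y, xbot) ∈ u)
    -- every `u` is downward-closed in the union:
    -- `u = (⋃U)|_{X(u)}` and `X(u)` is a lower set of the union order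
    (hrestr : ∀ u ∈ U, u = (⋃₀ U) ∩ (Xr u ×ˢ Xr u))
    (hlower : ∀ u ∈ U, ∀ a ∈ Xr u, ∀ b, (a, b) ∈ ⋃₀ U → b ∈ Xr u) :
    -- `⋃U` is a partial order on `X(⋃U)` with least element `x⊥`
    (∀ p ∈ ⋃₀ U, p.1 ∈ Xr (⋃₀ U) ∧ p.2 ∈ Xr (⋃₀ U)) ∧
    (∀ a ∈ Xr (⋃₀ U), (a, a) ∈ ⋃₀ U) ∧
    (∀ a b c, (a, b) ∈ ⋃₀ U → (b, c) ∈ ⋃₀ U → (a, c) ∈ ⋃₀ U) ∧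
    (∀ a b, (a, b) ∈ ⋃₀ U → (b, a) ∈ ⋃₀ U → a = b) ∧
    (∀ y ∈ Xr (⋃₀ U), (y, xbot) ∈ ⋃₀ U) := by
  have hrestr' : ∀ u ∈ U, ⋃₀ U ∩ (Xr u ×ˢ Xr u) ⊆ u := fun u hu => (hrestr u hu).ge
  exact ⟨fun _ hp => mem_Xr_sUnion_of_mem hdom hp, fun _ ha => ha,
    fun _ _ _ => sUnion_trans hdom htrans hrestr' hlower,
    fun _ _ => sUnion_antisymm hdom hantisymm hrestr',
    fun _ => sUnion_bot_le fun u hu => (hbot u hu).2⟩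

/-- Let `U` be a finite family of relations on `α` (`(a,b) ∈ u` meaning
`a ≥ b`), each a partial order on its reflexive support `X(u)`, all sharing a
common least element `x⊥`, and pairwise compatible.  If additionally every
`u ∈ U` is the restriction of `⋃U` to `X(u)` and `X(u)` is a lower set of the
union order, then `⋃U` is a partial order on `X(⋃U)` with least element `x⊥`. -/
theorem union_of_compatible_bounded_subposets
    {α : Type*} (U : Set (Set (α × α))) (xbot : α)
    (hfin : U.Finite) (hUne : U.Nonempty)
    -- each `u` is a partial order on its reflexive support `X(u)`
    (hdom : ∀ u ∈ U, ∀ p ∈ u, p.1 ∈ Xr u ∧ p.2 ∈ Xr u)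
    (htrans : ∀ u ∈ U, ∀ a b c, (a, b) ∈ u → (b, c) ∈ u → (a, c) ∈ u)
    (hantisymm : ∀ u ∈ U, ∀ a b, (a, b) ∈ u → (b, a) ∈ u → a = b)
    -- all share the common least element `x⊥`
    (hbot : ∀ u ∈ U, xbot ∈ Xr u ∧ ∀ y ∈ Xr u, (y, xbot) ∈ u)
    -- pairwise compatibility: on `X(u₁) ∩ X(u₂)` the relations agree
    (hcompat : ∀ u₁ ∈ U, ∀ u₂ ∈ U, ∀ a b,
      a ∈ Xr u₁ ∩ Xr u₂ → b ∈ Xr u₁ ∩ Xr u₂ → ((a, b) ∈ u₁ ↔ (a, b) ∈ u₂))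
    -- every `u` is downward-closed in the union:
    -- `u = (⋃U)|_{X(u)}` and `X(u)` is a lower set of the union order
    (hrestr : ∀ u ∈ U, u = (⋃₀ U) ∩ (Xr u ×ˢ Xr u))
    (hlower : ∀ u ∈ U, ∀ a ∈ Xr u, ∀ b, (a, b) ∈ ⋃₀ U → b ∈ Xr u) :
    -- `⋃U` is a partial order on `X(⋃U)` with least element `x⊥`
    (∀ p ∈ ⋃₀ U, p.1 ∈ Xr (⋃₀ U) ∧ p.2 ∈ Xr (⋃₀ U)) ∧
    (∀ a ∈ Xr (⋃₀ U), (a, a) ∈ ⋃₀ U) ∧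
    (∀ a b c, (a, b) ∈ ⋃₀ U → (b, c) ∈ ⋃₀ U → (a, c) ∈ ⋃₀ U) ∧
    (∀ a b, (a, b) ∈ ⋃₀ U → (b, a) ∈ ⋃₀ U → a = b) ∧
    (∀ y ∈ Xr (⋃₀ U), (y, xbot) ∈ ⋃₀ U) :=
  union_of_compatible_bounded_subposets_general U xbot hdom htrans hantisymm hbot hrestr hlower
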